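/- arXiv:1807.08783 — 2 statements merged into one kernel-verified Lean document; each statement's English description precedes it below -/
import Mathlib

section
/- Let x ∉ D and let n ≥ 1 be such that g_n'(x) = −1. Then μ({y : 0 < |x − y| < 2^{−n} and (T(y) − T(x))/(y − x) ≥ G_{n−1}'(x) − 2/5}) ≥ 2^{−(n+5)}, where μ denotes Lebesgue measure on ℝ and G_{n−1}'(x) = g_1'(x) + ⋯ + g_{n−1}'(x) (with G_0'(x) = 0). -/
open MeasureTheory Filter Set

noncomputable section

/-- The set of dyadic numbers of level `n`: `{k / 2^n : k ∈ ℤ}`. -/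
def Dset (n : ℕ) : Set ℝ := {y : ℝ | ∃ k : ℤ, y = (k : ℝ) / 2 ^ n}

/-- The set of all dyadic numbers. -/
def Ddyadic : Set ℝ := ⋃ n, Dset n

/-- `g k x = dist(x, D_k)`. -/
def g (k : ℕ) (x : ℝ) : ℝ := Metric.infDist x (Dset k)

/-- The Takagi function `T x = ∑_{k=1}^∞ g_k(x)`. -/
def T (x : ℝ) : ℝ := ∑' k : ℕ, g (k + 1) x

/-- `G' n x = g_1'(x) + ⋯ + g_n'(x)` (so `G' 0 x = 0`). -/
def G' (n : ℕ) (x : ℝ) : ℝ := ∑ k ∈ Finset.range n, deriv (g (k + 1)) x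

/-- `f` is approximately derivable at `x` with approximate derivative `L`:
for every `ε > 0`, the relative measure of the set of points `y` in `(x - r, x + r)`,
`y ≠ x`, where `|(f y - f x - L (y - x)) / (y - x)| ≥ ε`, divided by `2r`,
tends to `0` as `r → 0⁺`. -/
def ApproxDerivAt (f : ℝ → ℝ) (x L : ℝ) : Prop :=
  ∀ ε > (0 : ℝ), Tendsto
    (fun r : ℝ => volume (Ioo (x - r) (x + r) ∩
        {y : ℝ | y ≠ x ∧ ε ≤ |(f y - f x - L * (y - x)) / (y - x)|}) /
      ENNReal.ofReal (2 * r))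
    (nhdsWithin 0 (Ioi 0)) (nhds 0)

/-!
Write `n = N + 1`, `s = 2⁻ⁿ` and let `[a, a + s]` be the level-`n` dyadic cell containing `x`.
For `k < n` the function `g_k` is affine on this cell, so `G_{n-1}` has slope `G'_{n-1}(x)` there.
Since `g_n'(x) = -1`, the point `x` lies in the right half of the cell, where `g_n(x) = a + s - x`,
while `g_n(y) ≤ y - a` for every `y`. The tail `∑_{k > n} g_k` is at most `s / 3`, because
consecutive terms satisfy `g_k + g_{k+1} ≤ 2^{-(k+1)}`. For `y ∈ (a, a + s/25)` these bounds give
`T(y) - T(x) ≤ (G'_{n-1}(x) - 2/5)(y - x)`, and `s/25 ≥ 2^{-(n+5)}`.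
-/

lemma add_inv_two_pow_mem_Dset {k : ℕ} {p : ℝ} (hp : p ∈ Dset k) : p + (2 ^ k)⁻¹ ∈ Dset k := by
  obtain ⟨m, rfl⟩ := hp
  exact ⟨m + 1, by push_cast; ring⟩

lemma mem_Dset_or_add_mem_Dset {k : ℕ} {p : ℝ} (hp : p ∈ Dset (k + 1)) :
    p ∈ Dset k ∨ p + (2 ^ (k + 1))⁻¹ ∈ Dset k := by
  obtain ⟨m, rfl⟩ := hp
  rcases Int.even_or_odd' m with ⟨l, rfl | rfl⟩
  · exact Or.inl ⟨l, by push_cast; rw [pow_succ]; field_simp⟩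
  · exact Or.inr ⟨l + 1, by push_cast; rw [pow_succ]; field_simp; ring⟩

lemma inv_two_pow_le_abs_sub {k : ℕ} {d d' : ℝ} (hd : d ∈ Dset k) (hd' : d' ∈ Dset k)
    (hne : d ≠ d') : (2 ^ k)⁻¹ ≤ |d - d'| := by
  obtain ⟨m, rfl⟩ := hd
  obtain ⟨m', rfl⟩ := hd'
  have hm : (1 : ℝ) ≤ |(m : ℝ) - m'| := by
    exact_mod_cast Int.one_le_abs (sub_ne_zero.2 fun h => hne (by rw [h]))
  rw [← sub_div, abs_div, abs_of_pos (by positivity : (0 : ℝ) < 2 ^ k), inv_eq_one_div]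
  gcongr

/- The level-`k` dyadic cell `[c / 2^k, (c + 1) / 2^k)` of `y` is indexed by `c = ⌊2^k y⌋`. -/
lemma floor_two_pow_mul_eq_iff {k : ℕ} {c : ℤ} {y : ℝ} :
    ⌊2 ^ k * y⌋ = c ↔ (c : ℝ) / 2 ^ k ≤ y ∧ y < c / 2 ^ k + (2 ^ k)⁻¹ := by
  have hp : (0 : ℝ) < 2 ^ k := by positivity
  have hsucc : (c : ℝ) / 2 ^ k + (2 ^ k)⁻¹ = (c + 1) / 2 ^ k := by ring
  rw [Int.floor_eq_iff, hsucc, div_le_iff₀' hp, lt_div_iff₀' hp]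

lemma floor_two_pow_mul_eq_of_le {M i : ℕ} {x y : ℝ} (hi : i ≤ M)
    (h : ⌊2 ^ M * y⌋ = ⌊2 ^ M * x⌋) : ⌊2 ^ i * y⌋ = ⌊2 ^ i * x⌋ := by
  have key (z : ℝ) : ⌊2 ^ i * z⌋ = ⌊2 ^ M * z⌋ / ((2 ^ (M - i) : ℕ) : ℤ) := by
    rw [← Int.floor_div_natCast]
    congr 1
    rw [← Nat.sub_add_cancel hi]
    push_cast
    rw [Nat.add_sub_cancel, pow_add]
    field_simp
  rw [key, key, h]

lemma g_le_abs_sub {k : ℕ} {d : ℝ} (hd : d ∈ Dset k) (y : ℝ) : g k y ≤ |y - d| :=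
  Metric.infDist_le_dist_of_mem hd

lemma g_eq_abs_sub {k : ℕ} {d y : ℝ} (hd : d ∈ Dset k) (hy : |y - d| ≤ (2 ^ (k + 1))⁻¹) :
    g k y = |y - d| := by
  refine le_antisymm (g_le_abs_sub hd y) ((Metric.le_infDist ⟨d, hd⟩).2 fun d' hd' => ?_)
  rw [Real.dist_eq]
  rcases eq_or_ne d d' with rfl | hne
  · rfl
  · have hsep := inv_two_pow_le_abs_sub hd hd' hne
    have htri := abs_sub_le d y d'
    have hhalf : (2 : ℝ) ^ (k + 1) = 2 * 2 ^ k := pow_succ' 2 k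
    rw [abs_sub_comm d y] at htri
    rw [hhalf, mul_inv] at hy
    linarith

/- One endpoint of the level-`(k+1)` cell of `y` lies in `D_k`, the other in `D_{k+1}`. -/
lemma g_add_g_succ_le (k : ℕ) (y : ℝ) : g k y + g (k + 1) y ≤ (2 ^ (k + 1))⁻¹ := by
  set p : ℝ := ⌊2 ^ (k + 1) * y⌋ / 2 ^ (k + 1)
  obtain ⟨hpy, hyp⟩ := floor_two_pow_mul_eq_iff.1 (rfl : ⌊2 ^ (k + 1) * y⌋ = _)
  have hp : p ∈ Dset (k + 1) := ⟨_, rfl⟩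
  have hleft := g_le_abs_sub hp y
  have hright := g_le_abs_sub (add_inv_two_pow_mem_Dset hp) y
  rw [abs_of_nonneg (by linarith)] at hleft
  rw [abs_of_nonpos (by linarith)] at hright
  rcases mem_Dset_or_add_mem_Dset hp with h | h
  · have := g_le_abs_sub h y
    rw [abs_of_nonneg (by linarith)] at this
    linarith
  · have := g_le_abs_sub h y
    rw [abs_of_nonpos (by linarith)] at this
    linarith

lemma summable_g (y : ℝ) : Summable fun k => g k y := by
  refine Summable.of_nonneg_of_le (fun k => Metric.infDist_nonneg) (fun k => ?_)
    summable_geometric_two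
  have hpair := g_add_g_succ_le k y
  have hnonneg : 0 ≤ g (k + 1) y := Metric.infDist_nonneg
  have hgeom : ((2 : ℝ) ^ (k + 1))⁻¹ ≤ (1 / 2) ^ k := by
    rw [one_div, inv_pow]
    gcongr
    · norm_num
    · omega
  linarith

lemma tsum_g_tail_le (M : ℕ) (y : ℝ) : ∑' j, g (j + M + 1) y ≤ (2 ^ M)⁻¹ / 3 := by
  set f : ℕ → ℝ := fun j => g (j + M + 1) y
  have hf : Summable f := by
    simpa only [f, add_assoc] using (summable_nat_add_iff (M + 1)).2 (summable_g y)
  have hpair (i : ℕ) : f (2 * i) + f (2 * i + 1) ≤ (2 ^ (M + 2))⁻¹ * (1 / 4) ^ i := by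
    have h := g_add_g_succ_le (2 * i + M + 1) y
    have hpow : (2 : ℝ) ^ (2 * i + M + 1 + 1) = 2 ^ (M + 2) * 4 ^ i := by
      rw [show 2 * i + M + 1 + 1 = (M + 2) + 2 * i by omega, pow_add, pow_mul]
      norm_num
    rw [hpow, mul_inv, ← inv_pow (4 : ℝ) i, ← one_div (4 : ℝ)] at h
    simpa only [f, show 2 * i + 1 + M + 1 = 2 * i + M + 1 + 1 by omega] using h
  have heven : Summable fun i => f (2 * i) := hf.comp_injective (mul_right_injective₀ two_ne_zero)
  have hodd : Summable fun i => f (2 * i + 1) :=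
    hf.comp_injective ((add_left_injective 1).comp (mul_right_injective₀ two_ne_zero))
  have hgeom : Summable fun i : ℕ => ((2 : ℝ) ^ (M + 2))⁻¹ * (1 / 4) ^ i :=
    (summable_geometric_of_lt_one (by norm_num) (by norm_num)).mul_left _
  calc ∑' j, f j = ∑' i, (f (2 * i) + f (2 * i + 1)) := by
        rw [heven.tsum_add hodd, tsum_even_add_odd heven hodd]
    _ ≤ ∑' i : ℕ, ((2 : ℝ) ^ (M + 2))⁻¹ * (1 / 4) ^ i := (heven.add hodd).tsum_le_tsum hpair hgeom
    _ = (2 ^ M)⁻¹ / 3 := by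
        rw [tsum_mul_left, tsum_geometric_of_lt_one (by norm_num) (by norm_num), pow_add]
        field_simp
        norm_num

lemma T_eq_sum_add_tsum (M : ℕ) (y : ℝ) :
    T y = ∑ j ∈ Finset.range M, g (j + 1) y + ∑' j, g (j + M + 1) y :=
  (((summable_nat_add_iff 1).2 (summable_g y)).sum_add_tsum_nat_add M).symm

lemma g_eqOn_affine {k : ℕ} {p : ℝ} (hp : p ∈ Dset (k + 1)) :
    ∃ σ b : ℝ, EqOn (g k) (fun y => σ * y + b) (Icc p (p + (2 ^ (k + 1))⁻¹)) := by
  rcases mem_Dset_or_add_mem_Dset hp with h | h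
  · refine ⟨1, -p, fun y ⟨hpy, hyp⟩ => ?_⟩
    have habs : |y - p| = y - p := abs_of_nonneg (by linarith)
    rw [g_eq_abs_sub h (by rw [habs]; linarith), habs]
    ring
  · refine ⟨-1, p + (2 ^ (k + 1))⁻¹, fun y ⟨hpy, hyp⟩ => ?_⟩
    have habs : |y - (p + (2 ^ (k + 1))⁻¹)| = p + (2 ^ (k + 1))⁻¹ - y := by
      rw [abs_sub_comm]; exact abs_of_nonneg (by linarith)
    rw [g_eq_abs_sub h (by rw [habs]; linarith), habs]
    ring

lemma g_sub_eq_deriv_mul {k : ℕ} {x y : ℝ} (hx : x ∉ Dset (k + 1))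
    (hxy : ⌊2 ^ (k + 1) * y⌋ = ⌊2 ^ (k + 1) * x⌋) :
    g k y - g k x = deriv (g k) x * (y - x) := by
  set p : ℝ := ⌊2 ^ (k + 1) * x⌋ / 2 ^ (k + 1)
  have hp : p ∈ Dset (k + 1) := ⟨_, rfl⟩
  obtain ⟨hpx, hxp⟩ := floor_two_pow_mul_eq_iff.1 (rfl : ⌊2 ^ (k + 1) * x⌋ = _)
  obtain ⟨hpy, hyp⟩ := floor_two_pow_mul_eq_iff.1 hxy
  have hpx' : p < x := hpx.lt_of_ne fun h => hx (h ▸ hp)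
  obtain ⟨σ, b, hσ⟩ := g_eqOn_affine hp
  have hderiv : deriv (g k) x = σ := by
    rw [(Filter.eventuallyEq_of_mem (Icc_mem_nhds hpx' hxp) hσ).deriv_eq]
    simp
  rw [hderiv, hσ ⟨hpy, hyp.le⟩, hσ ⟨hpx, hxp.le⟩]
  ring

lemma deriv_g_eq_one {k : ℕ} {d x : ℝ} (hd : d ∈ Dset k) (hdx : d < x)
    (hxd : x < d + (2 ^ (k + 1))⁻¹) : deriv (g k) x = 1 := by
  have hloc : g k =ᶠ[nhds x] fun y => y - d := by
    filter_upwards [Ioo_mem_nhds hdx hxd] with y ⟨hdy, hyd⟩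
    have habs : |y - d| = y - d := abs_of_pos (by linarith)
    rw [g_eq_abs_sub hd (by rw [habs]; linarith), habs]
  rw [hloc.deriv_eq, deriv_sub_const, deriv_id'']

lemma sum_g_sub_eq_G'_mul {N : ℕ} {x y : ℝ} (hx : x ∉ Ddyadic)
    (hxy : ⌊2 ^ (N + 1) * y⌋ = ⌊2 ^ (N + 1) * x⌋) :
    ∑ j ∈ Finset.range N, (g (j + 1) y - g (j + 1) x) = G' N x * (y - x) := by
  rw [G', Finset.sum_mul]
  refine Finset.sum_congr rfl fun j hj => g_sub_eq_deriv_mul (fun h => hx (mem_iUnion_of_mem _ h))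
    (floor_two_pow_mul_eq_of_le ?_ hxy)
  have := Finset.mem_range.1 hj
  omega

lemma T_sub_T_le {N : ℕ} {x y : ℝ} (hx : x ∉ Ddyadic)
    (hxy : ⌊2 ^ (N + 1) * y⌋ = ⌊2 ^ (N + 1) * x⌋) :
    T y - T x ≤ G' N x * (y - x) + (g (N + 1) y - g (N + 1) x) + (2 ^ (N + 1))⁻¹ / 3 := by
  have hhead := sum_g_sub_eq_G'_mul hx hxy
  rw [Finset.sum_sub_distrib] at hhead
  have htail := tsum_g_tail_le (N + 1) y
  have htail_nonneg : 0 ≤ ∑' j, g (j + (N + 1) + 1) x :=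
    tsum_nonneg fun _ => Metric.infDist_nonneg
  rw [T_eq_sum_add_tsum (N + 1) y, T_eq_sum_add_tsum (N + 1) x, Finset.sum_range_succ,
    Finset.sum_range_succ]
  linarith

lemma G'_sub_two_fifths_le_slope {N : ℕ} {x y : ℝ} (m : ℤ) (hx : x ∉ Ddyadic)
    (hmx : (m : ℝ) / 2 ^ (N + 1) + (2 ^ (N + 1))⁻¹ / 2 ≤ x)
    (hxm : x < m / 2 ^ (N + 1) + (2 ^ (N + 1))⁻¹)
    (hmy : (m : ℝ) / 2 ^ (N + 1) < y) (hym : y < m / 2 ^ (N + 1) + (2 ^ (N + 1))⁻¹ / 25) :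
    G' N x - 2 / 5 ≤ (T y - T x) / (y - x) := by
  set s : ℝ := (2 ^ (N + 1))⁻¹
  set a : ℝ := m / 2 ^ (N + 1)
  have ha : a ∈ Dset (N + 1) := ⟨m, rfl⟩
  have hs : 0 < s := by positivity
  have hxy : ⌊2 ^ (N + 1) * y⌋ = ⌊2 ^ (N + 1) * x⌋ := by
    rw [floor_two_pow_mul_eq_iff.2 ⟨hmy.le, by linarith⟩,
      floor_two_pow_mul_eq_iff.2 ⟨by linarith, hxm⟩]
  have hgx : g (N + 1) x = a + s - x := by
    have habs : |x - (a + s)| = a + s - x := by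
      rw [abs_sub_comm]; exact abs_of_nonneg (by linarith)
    have hhalf : ((2 : ℝ) ^ (N + 1 + 1))⁻¹ = s / 2 := by
      rw [pow_succ, mul_inv, div_eq_mul_inv]
    rw [g_eq_abs_sub (add_inv_two_pow_mem_Dset ha) (by rw [habs, hhalf]; linarith), habs]
  have hgy := g_le_abs_sub ha y
  rw [abs_of_pos (sub_pos.2 hmy)] at hgy
  have hT := T_sub_T_le hx hxy
  rw [le_div_iff_of_neg (by linarith)]
  linarith [show (G' N x - 2 / 5) * (y - x) = G' N x * (y - x) - 2 / 5 * (y - x) by ring]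

theorem takagi_upper_slope_measure (x : ℝ) (hx : x ∉ Ddyadic)
    (n : ℕ) (hn : 1 ≤ n) (hg : deriv (g n) x = -1) :
    ENNReal.ofReal (((2 : ℝ) ^ (n + 5))⁻¹) ≤
      volume {y : ℝ | 0 < |x - y| ∧ |x - y| < ((2 : ℝ) ^ n)⁻¹ ∧
        G' (n - 1) x - 2 / 5 ≤ (T y - T x) / (y - x)} := by
  obtain ⟨N, rfl⟩ : ∃ N, n = N + 1 := ⟨n - 1, by omega⟩
  set s : ℝ := (2 ^ (N + 1))⁻¹
  set m := ⌊2 ^ (N + 1) * x⌋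
  set a : ℝ := m / 2 ^ (N + 1)
  have ha : a ∈ Dset (N + 1) := ⟨m, rfl⟩
  have hs : 0 < s := by positivity
  obtain ⟨hax, hxa⟩ := floor_two_pow_mul_eq_iff.1 (rfl : m = m)
  have hmid : a + s / 2 ≤ x := by
    by_contra! h
    have hax' : a < x := hax.lt_of_ne fun hxa' => hx (mem_iUnion_of_mem (N + 1) (hxa' ▸ ha))
    have := deriv_g_eq_one ha hax' (by rwa [pow_succ, mul_inv, ← div_eq_mul_inv])
    linarith
  have hsub : Ioo a (a + s / 25) ⊆ {y : ℝ | 0 < |x - y| ∧ |x - y| < ((2 : ℝ) ^ (N + 1))⁻¹ ∧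
      G' (N + 1 - 1) x - 2 / 5 ≤ (T y - T x) / (y - x)} := fun y ⟨hay, hya⟩ =>
    ⟨abs_pos.2 (by linarith), by rw [abs_of_pos] <;> linarith,
      G'_sub_two_fifths_le_slope m hx hmid hxa hay hya⟩
  calc ENNReal.ofReal ((2 ^ (N + 1 + 5))⁻¹) ≤ ENNReal.ofReal (s / 25) := by
        refine ENNReal.ofReal_le_ofReal ?_
        rw [pow_add, mul_inv]
        norm_num
        linarith
    _ = volume (Ioo a (a + s / 25)) := by rw [Real.volume_Ioo, add_sub_cancel_left]
    _ ≤ _ := measure_mono hsub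
end
end

section
/- Let x ∈ D and let n_0 ≥ 0 be the smallest integer such that x ∈ D_{n_0+1}. Then for every integer n > 2n_0 and every real h with 0 < 2|h| < 2^{−n}, one has T(x + h) − T(x) ≥ (n − 2n_0)·|h|. -/
open MeasureTheory Filter Set

noncomputable section

/-! At a dyadic `x ∈ D_{n₀+1}` the increment `g_k(x + h) - g_k(x)` is at least `-|h|` for `k ≤ n₀`,
since `g_k` is `1`-Lipschitz; it equals `|h|` for `n₀ < k ≤ n`, since `x` is a node of the grid
`D_k` and `x + h` lies within half a mesh of it; and it is `≥ 0` for `k > n`, since `g_k(x) = 0`. -/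

lemma Dset_mono {m k : ℕ} (hmk : m ≤ k) : Dset m ⊆ Dset k := by
  rintro y ⟨j, rfl⟩
  refine ⟨j * 2 ^ (k - m), ?_⟩
  push_cast
  rw [div_eq_div_iff (by positivity) (by positivity), mul_assoc, ← pow_add, Nat.sub_add_cancel hmk]

lemma inv_two_pow_le_dist_of_mem_Dset {k : ℕ} {y z : ℝ} (hy : y ∈ Dset k) (hz : z ∈ Dset k)
    (hyz : y ≠ z) : ((2 : ℝ) ^ k)⁻¹ ≤ dist y z := by
  obtain ⟨i, rfl⟩ := hy
  obtain ⟨j, rfl⟩ := hz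
  have hij : (1 : ℝ) ≤ |(i : ℝ) - j| := by
    rw [← Int.cast_sub, ← Int.cast_abs]
    exact_mod_cast Int.one_le_abs (sub_ne_zero.2 fun h => hyz (by rw [h]))
  rw [Real.dist_eq, div_sub_div_same, abs_div, abs_of_pos (by positivity : (0 : ℝ) < 2 ^ k),
    inv_eq_one_div]
  gcongr

lemma g_nonneg (k : ℕ) (y : ℝ) : 0 ≤ g k y := Metric.infDist_nonneg

lemma g_eq_zero_of_mem {k : ℕ} {y : ℝ} (hy : y ∈ Dset k) : g k y = 0 :=
  Metric.infDist_zero_of_mem hy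

lemma lipschitzWith_g (k : ℕ) : LipschitzWith 1 (g k) := Metric.lipschitz_infDist_pt _

lemma g_le_inv_two_pow (k : ℕ) (y : ℝ) : g k y ≤ ((2 : ℝ) ^ k)⁻¹ := by
  have hp : (0 : ℝ) < 2 ^ k := by positivity
  calc g k y ≤ dist y (⌊y * 2 ^ k⌋ / 2 ^ k) := Metric.infDist_le_dist_of_mem ⟨_, rfl⟩
    _ = Int.fract (y * 2 ^ k) / 2 ^ k := by
      rw [Real.dist_eq, ← abs_of_nonneg (div_nonneg (Int.fract_nonneg (y * 2 ^ k)) hp.le),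
        Int.fract, sub_div, mul_div_cancel_right₀ _ hp.ne']
    _ ≤ ((2 : ℝ) ^ k)⁻¹ := by
      rw [inv_eq_one_div]
      gcongr
      exact (Int.fract_lt_one _).le

lemma g_add_of_mem {k : ℕ} {x h : ℝ} (hx : x ∈ Dset k) (hh : 2 * |h| ≤ ((2 : ℝ) ^ k)⁻¹) :
    g k (x + h) = |h| := by
  have hdist : dist (x + h) x = |h| := by rw [Real.dist_eq, add_sub_cancel_left]
  refine le_antisymm (hdist ▸ Metric.infDist_le_dist_of_mem hx)
    ((Metric.le_infDist ⟨x, hx⟩).2 fun z hz => ?_)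
  rcases eq_or_ne x z with rfl | hxz
  · exact hdist.ge
  · have := inv_two_pow_le_dist_of_mem_Dset hx hz hxz
    have := dist_triangle x (x + h) z
    rw [dist_comm x (x + h), hdist] at this
    linarith

lemma summable_g_succ (y : ℝ) : Summable fun k : ℕ => g (k + 1) y := by
  refine .of_nonneg_of_le (fun k => g_nonneg _ _) (fun k => ?_) summable_geometric_two
  calc g (k + 1) y ≤ ((2 : ℝ) ^ (k + 1))⁻¹ := g_le_inv_two_pow _ _
    _ ≤ (1 / 2) ^ k := by
      rw [one_div, inv_pow]
      gcongr
      · norm_num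
      · omega

lemma sum_range_g_le_T (n : ℕ) (y : ℝ) : ∑ k ∈ Finset.range n, g (k + 1) y ≤ T y :=
  (summable_g_succ y).sum_le_tsum _ fun _ _ => g_nonneg _ _

lemma T_eq_sum_range_of_mem {m : ℕ} {x : ℝ} (hx : x ∈ Dset (m + 1)) :
    T x = ∑ k ∈ Finset.range m, g (k + 1) x :=
  tsum_eq_sum fun _ hk => g_eq_zero_of_mem <| Dset_mono (by simpa using hk) hx

theorem takagi_dyadic_increment_general (x : ℝ)
    (n0 : ℕ) (hx : x ∈ Dset (n0 + 1)) :
    ∀ n : ℕ, 2 * n0 < n → ∀ h : ℝ, 0 < 2 * |h| → 2 * |h| < ((2 : ℝ) ^ n)⁻¹ →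
      ((n : ℝ) - 2 * n0) * |h| ≤ T (x + h) - T x := by
  intro n hn h _ hh
  have hfine : ∀ k ∈ Finset.Ico n0 n, |h| = g (k + 1) (x + h) := by
    intro k hk
    rw [Finset.mem_Ico] at hk
    refine (g_add_of_mem (Dset_mono (by omega) hx) (hh.le.trans ?_)).symm
    exact inv_anti₀ (by positivity) (pow_le_pow_right₀ one_le_two hk.2)
  have hcoarse : ∀ k ∈ Finset.range n0, -|h| ≤ g (k + 1) (x + h) - g (k + 1) x := by
    intro k _
    have := (lipschitzWith_g (k + 1)).dist_le_mul (x + h) x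
    rw [NNReal.coe_one, one_mul, Real.dist_eq, Real.dist_eq, add_sub_cancel_left] at this
    linarith [neg_abs_le (g (k + 1) (x + h) - g (k + 1) x)]
  calc ((n : ℝ) - 2 * n0) * |h| = ∑ k ∈ Finset.Ico n0 n, |h| + ∑ k ∈ Finset.range n0, -|h| := by
        simp only [Finset.sum_const, Nat.card_Ico, Finset.card_range, nsmul_eq_mul]
        push_cast [(by omega : n0 ≤ n)]
        ring
    _ ≤ ∑ k ∈ Finset.Ico n0 n, g (k + 1) (x + h)
          + ∑ k ∈ Finset.range n0, (g (k + 1) (x + h) - g (k + 1) x) := by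
        rw [Finset.sum_congr rfl hfine]
        exact add_le_add le_rfl (Finset.sum_le_sum hcoarse)
    _ = ∑ k ∈ Finset.range n, g (k + 1) (x + h) - ∑ k ∈ Finset.range n0, g (k + 1) x := by
        rw [← Finset.sum_range_add_sum_Ico _ (by omega : n0 ≤ n), Finset.sum_sub_distrib]
        ring
    _ ≤ T (x + h) - T x := by
        rw [T_eq_sum_range_of_mem hx]
        gcongr
        exact sum_range_g_le_T n (x + h)

theorem takagi_dyadic_increment (x : ℝ) (hxD : x ∈ Ddyadic)
    (n0 : ℕ) (hx : x ∈ Dset (n0 + 1)) (hmin : ∀ m : ℕ, x ∈ Dset (m + 1) → n0 ≤ m) :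
    ∀ n : ℕ, 2 * n0 < n → ∀ h : ℝ, 0 < 2 * |h| → 2 * |h| < ((2 : ℝ) ^ n)⁻¹ →
      ((n : ℝ) - 2 * n0) * |h| ≤ T (x + h) - T x :=
  takagi_dyadic_increment_general x n0 hx
end
end
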